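/- In the free unital associative ring ℤ⟨X⟩ on a countable set X, for all elements a₁,...,a₅, the element [a₁,a₂,a₃][a₄,a₅] + [a₁,a₂,a₄][a₃,a₅] lies in the two-sided ideal T⁽⁴⁾ generated by all left-normed commutators [b₁,b₂,b₃,b₄]. -/

import Mathlib

/-! Expanding `[[u, ab], c]` by the Leibniz rule in both slots produces the two products
`[u, a][b, c]` and `[a, c][u, b]`; the commutator `[[u, b], [a, c]]` turns the latter into
`[u, b][a, c]`. Every other term is of the form `[[u, x], y]` times a ring element, so with
`u = [a₁, a₂]` the whole sum lies in `T⁽⁴⁾`. -/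

noncomputable section

/-- `ℤ⟨X⟩`, the free unital associative ring on a countable set `X = {x₀, x₁, …}`. -/
abbrev R : Type := FreeAlgebra ℤ ℕ

/-- The commutator `[a,b] = ab - ba`. -/
def br (a b : R) : R := a * b - b * a

/-- `T⁽⁴⁾`: the two-sided ideal generated by all left-normed commutators of length 4. -/
def T4 : TwoSidedIdeal R := TwoSidedIdeal.span {y | ∃ a b c d : R, y = br (br (br a b) c) d}

theorem lie_mul_lie_add_lie_mul_lie {A : Type*} [Ring A] (u a b c : A) :
    ⁅u, a⁆ * ⁅b, c⁆ + ⁅u, b⁆ * ⁅a, c⁆ =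
      ⁅⁅u, a * b⁆, c⁆ - ⁅⁅u, a⁆, c⁆ * b - a * ⁅⁅u, b⁆, c⁆ + ⁅⁅u, b⁆, ⁅a, c⁆⁆ := by
  simp only [Ring.lie_def]
  noncomm_ring

theorem lie_mul_lie_add_lie_mul_lie_mem {A : Type*} [Ring A] {I : TwoSidedIdeal A} {u : A}
    (hu : ∀ x y : A, ⁅⁅u, x⁆, y⁆ ∈ I) (a b c : A) :
    ⁅u, a⁆ * ⁅b, c⁆ + ⁅u, b⁆ * ⁅a, c⁆ ∈ I := by
  rw [lie_mul_lie_add_lie_mul_lie]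
  exact I.add_mem (I.sub_mem (I.sub_mem (hu _ _) (I.mul_mem_right _ _ (hu _ _)))
    (I.mul_mem_left _ _ (hu _ _))) (hu _ _)

theorem br_eq_lie (a b : R) : br a b = ⁅a, b⁆ :=
  (Ring.lie_def a b).symm

theorem br_br_br_mem_T4 (a b c d : R) : br (br (br a b) c) d ∈ T4 :=
  TwoSidedIdeal.subset_span ⟨a, b, c, d, rfl⟩

theorem stmt0 (a₁ a₂ a₃ a₄ a₅ : R) :
    br (br a₁ a₂) a₃ * br a₄ a₅ + br (br a₁ a₂) a₄ * br a₃ a₅ ∈ T4 := by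
  have hu : ∀ x y, ⁅⁅br a₁ a₂, x⁆, y⁆ ∈ T4 := fun x y => by
    simpa only [br_eq_lie] using br_br_br_mem_T4 a₁ a₂ x y
  simpa only [br_eq_lie] using lie_mul_lie_add_lie_mul_lie_mem hu a₃ a₄ a₅
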